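/- The quaternion matrix algebra M₂(ℍ) is generated as a real unital algebra by the four projections P₁ = [[1,0],[0,0]], P₂ = (1/2)[[1,1],[1,1]], P₃ = (1/2)[[1,−i],[i,1]], P₄ = (1/2)[[1,−j],[j,1]]. -/

import Mathlib

open Matrix

noncomputable def qi : Quaternion ℝ := ⟨0, 1, 0, 0⟩
noncomputable def qj : Quaternion ℝ := ⟨0, 0, 1, 0⟩

noncomputable def P1 : Matrix (Fin 2) (Fin 2) (Quaternion ℝ) := !![1, 0; 0, 0]
noncomputable def P2 : Matrix (Fin 2) (Fin 2) (Quaternion ℝ) :=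
  (2⁻¹ : ℝ) • !![1, 1; 1, 1]
noncomputable def P3 : Matrix (Fin 2) (Fin 2) (Quaternion ℝ) :=
  (2⁻¹ : ℝ) • !![1, -qi; qi, 1]
noncomputable def P4 : Matrix (Fin 2) (Fin 2) (Quaternion ℝ) :=
  (2⁻¹ : ℝ) • !![1, -qj; qj, 1]

/-!
Products of `P₁` with `P₂`, `P₃`, `P₄` produce the off-diagonal matrix units `E₀₁`, `E₁₀`
and the matrices `i E₁₀`, `j E₁₀`; multiplying by `E₀₁` moves `i` and `j` into the corner
`E₀₀`. Since `i` and `j` generate `ℍ`, the corner `ℍ E₀₀` lies in the algebra, and multiplying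
it by `Eₐ₀` on the left and `E₀ᵦ` on the right gives every `q Eₐᵦ`.
-/

open QuaternionAlgebra
open scoped Quaternion

theorem QuaternionAlgebra.adjoin_i_j {R : Type*} [CommRing R] {c₁ c₂ c₃ : R} :
    Algebra.adjoin R {(Basis.self R : Basis ℍ[R,c₁,c₂,c₃] c₁ c₂ c₃).i, (Basis.self R).j} = ⊤ := by
  set q : Basis ℍ[R,c₁,c₂,c₃] c₁ c₂ c₃ := Basis.self R
  have hk : q.k ∈ Algebra.adjoin R {q.i, q.j} := by
    rw [← q.i_mul_j]
    exact mul_mem (Algebra.subset_adjoin (by simp)) (Algebra.subset_adjoin (by simp))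
  have hid : q.liftHom = AlgHom.id R ℍ[R,c₁,c₂,c₃] := by
    ext <;> simp [q, Basis.lift]
  rw [eq_top_iff, ← Algebra.range_id, ← hid, Basis.range_liftHom, Algebra.adjoin_le_iff]
  rintro x (rfl | rfl | rfl)
  exacts [Algebra.subset_adjoin (by simp), Algebra.subset_adjoin (by simp), hk]

namespace Matrix

variable {R B n : Type*} [CommSemiring R] [Semiring B] [Algebra R B] [Fintype n] [DecidableEq n]

theorem single_mem_of_adjoin_eq_top {A : Subalgebra R (Matrix n n B)} {S : Set B}
    (hS : Algebra.adjoin R S = ⊤) (i₀ : n) (hone : single i₀ i₀ (1 : B) ∈ A)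
    (hgen : ∀ s ∈ S, single i₀ i₀ s ∈ A) (b : B) : single i₀ i₀ b ∈ A := by
  have hb : b ∈ Algebra.adjoin R S := hS ▸ Algebra.mem_top
  induction hb using Algebra.adjoin_induction with
  | mem s hs => exact hgen s hs
  | algebraMap r =>
    rw [Algebra.algebraMap_eq_smul_one, ← smul_single]
    exact A.smul_mem hone r
  | add x y _ _ hx hy => rw [single_add]; exact add_mem hx hy
  | mul x y _ _ hx hy => rw [← single_mul_single_same x i₀ i₀ i₀]; exact mul_mem hx hy

theorem _root_.Subalgebra.eq_top_of_single_mem {A : Subalgebra R (Matrix n n B)} (i₀ : n)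
    (hrow : ∀ j, single i₀ j (1 : B) ∈ A) (hcol : ∀ i, single i i₀ (1 : B) ∈ A)
    (hcorner : ∀ b, single i₀ i₀ b ∈ A) : A = ⊤ := by
  have hsingle : ∀ i j b, single i j b ∈ A := fun i j b => by
    simpa only [single_mul_single_same, one_mul, mul_one] using
      mul_mem (mul_mem (hcol i) (hcorner b)) (hrow j)
  refine eq_top_iff.2 fun x _ => ?_
  rw [matrix_eq_sum_single x]
  exact Subalgebra.sum_mem _ fun i _ => Subalgebra.sum_mem _ fun j _ => hsingle i j _

end Matrix

theorem P1_eq_single : P1 = single 0 0 1 := by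
  refine Matrix.ext fun i j => ?_
  fin_cases i <;> fin_cases j <;> simp [P1]

theorem two_smul_P1_mul_sub_P1 (a b : ℍ[ℝ]) :
    (2 : ℝ) • (P1 * (2⁻¹ : ℝ) • !![1, a; b, 1]) - P1 = single 0 1 a := by
  refine Matrix.ext fun i j => ?_
  fin_cases i <;> fin_cases j <;> simp [P1, single]

theorem two_smul_mul_P1_sub_P1 (a b : ℍ[ℝ]) :
    (2 : ℝ) • ((2⁻¹ : ℝ) • !![1, a; b, 1] * P1) - P1 = single 1 0 b := by
  refine Matrix.ext fun i j => ?_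
  fin_cases i <;> fin_cases j <;> simp [P1, single]

theorem single_mem_of_half_mem {A : Subalgebra ℝ (Matrix (Fin 2) (Fin 2) ℍ[ℝ])} (hP1 : P1 ∈ A)
    {a b : ℍ[ℝ]} (h : (2⁻¹ : ℝ) • !![1, a; b, 1] ∈ A) : single 0 1 a ∈ A ∧ single 1 0 b ∈ A := by
  rw [← two_smul_P1_mul_sub_P1 a b, ← two_smul_mul_P1_sub_P1 a b]
  exact ⟨sub_mem (A.smul_mem (mul_mem hP1 h) 2) hP1, sub_mem (A.smul_mem (mul_mem h hP1) 2) hP1⟩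

theorem stmt14 :
    Algebra.adjoin ℝ ({P1, P2, P3, P4} :
      Set (Matrix (Fin 2) (Fin 2) (Quaternion ℝ))) = ⊤ := by
  set A := Algebra.adjoin ℝ ({P1, P2, P3, P4} : Set (Matrix (Fin 2) (Fin 2) (Quaternion ℝ)))
  have hP1 : P1 ∈ A := Algebra.subset_adjoin (by simp)
  obtain ⟨h01, h10⟩ := single_mem_of_half_mem (a := 1) (b := 1) hP1
    (show P2 ∈ A from Algebra.subset_adjoin (by simp))
  obtain ⟨-, hi⟩ := single_mem_of_half_mem (a := -qi) (b := qi) hP1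
    (show P3 ∈ A from Algebra.subset_adjoin (by simp))
  obtain ⟨-, hj⟩ := single_mem_of_half_mem (a := -qj) (b := qj) hP1
    (show P4 ∈ A from Algebra.subset_adjoin (by simp))
  have h00 : single 0 0 (1 : ℍ[ℝ]) ∈ A := P1_eq_single ▸ hP1
  have hcorner : ∀ q ∈ ({qi, qj} : Set ℍ[ℝ]), single 0 0 q ∈ A := by
    rintro q (rfl | rfl)
    · simpa only [single_mul_single_same, one_mul] using mul_mem h01 hi
    · simpa only [single_mul_single_same, one_mul] using mul_mem h01 hj
  exact Subalgebra.eq_top_of_single_mem 0 (Fin.forall_fin_two.2 ⟨h00, h01⟩)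
    (Fin.forall_fin_two.2 ⟨h00, h10⟩) (single_mem_of_adjoin_eq_top adjoin_i_j 0 h00 hcorner)
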